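/- arXiv:2207.00411 — 2 statements merged into one kernel-verified Lean document; each statement's English description precedes it below -/
import Mathlib

section
/- Fix x ∈ ℝ^d with ‖x‖ = 1, γ ∈ (0,1), and a constant C_0 > 0. With probability at least 1 − γ over the random initialization (W_0, a), the bound |f(x; a, W)| ≤ √(2·log(2/γ)) + 2·log(2/γ)/√m + C_0 holds simultaneously for all W ∈ B_{2,∞}(W_0, C_0/√m). -/
open MeasureTheory ProbabilityTheory

/-- Product of `d` i.i.d. standard Gaussians: the law of a standard Gaussian
vector `N(0, I_d)` on `ℝ^d` (represented as `Fin d → ℝ`). -/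
noncomputable def gaussVec (d : ℕ) : Measure (Fin d → ℝ) :=
  Measure.pi fun _ => gaussianReal 0 1

/-- Law of `m` i.i.d. standard Gaussian vectors in `ℝ^d` (the initialization `W₀`). -/
noncomputable def gaussMat (m d : ℕ) : Measure (Fin m → Fin d → ℝ) :=
  Measure.pi fun _ => gaussVec d

/-- Law of `m` i.i.d. uniform random signs (encoded as booleans). -/
noncomputable def signsMeasure (m : ℕ) : Measure (Fin m → Bool) :=
  Measure.pi fun _ => (PMF.uniformOfFintype Bool).toMeasure

/-- Joint law of the random initialization `(W₀, a)`. -/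
noncomputable def initMeasure (m d : ℕ) :
    Measure ((Fin m → Fin d → ℝ) × (Fin m → Bool)) :=
  (gaussMat m d).prod (signsMeasure m)

/-- The sign `±1` encoded by a boolean. -/
def signOf (b : Bool) : ℝ := if b then 1 else -1

/-- Euclidean inner product on `Fin d → ℝ`. -/
def dotp {d : ℕ} (w x : Fin d → ℝ) : ℝ := ∑ i, w i * x i

/-- Euclidean norm on `Fin d → ℝ`. -/
noncomputable def euclNorm {d : ℕ} (w : Fin d → ℝ) : ℝ :=
  Real.sqrt (∑ i, (w i) ^ 2)

/-- Two-layer ReLU network `f(x; a, W) = (1/√m) ∑ₛ aₛ · max(0, ⟨wₛ, x⟩)`. -/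
noncomputable def netF {m d : ℕ} (a : Fin m → Bool) (W : Fin m → Fin d → ℝ)
    (x : Fin d → ℝ) : ℝ :=
  (1 / Real.sqrt m) * ∑ s, signOf (a s) * max 0 (dotp (W s) x)

/-- (a.e.) input gradient `G(x; a, W) = (1/√m) ∑ₛ aₛ · 𝟙[⟨wₛ, x⟩ > 0] · wₛ`. -/
noncomputable def netG {m d : ℕ} (a : Fin m → Bool) (W : Fin m → Fin d → ℝ)
    (x : Fin d → ℝ) : Fin d → ℝ :=
  fun i => (1 / Real.sqrt m) *
    ∑ s, signOf (a s) * (if 0 < dotp (W s) x then (1 : ℝ) else 0) * W s i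

/-- `W ∈ B_{2,∞}(W₀, V)`: every column of `W` is within Euclidean distance `V`
of the corresponding column of `W₀`. -/
def inBall {m d : ℕ} (W0 W : Fin m → Fin d → ℝ) (V : ℝ) : Prop :=
  ∀ s, euclNorm (fun i => W s i - W0 s i) ≤ V

/-!
At initialization each neuron `aₛ · max(0, ⟨wₛ, x⟩)` is sub-Gaussian with variance proxy
`‖x‖² = 1`: averaging over the independent sign turns `exp` into `cosh`, and
`cosh (t · max(0, g)) ≤ cosh (t g)`, whose mean is `exp (t² / 2)` because `⟨wₛ, x⟩ ~ N(0, 1)`.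
The neurons are independent, so `f(x; a, W₀)` is again sub-Gaussian with proxy `1`, and the
Chernoff bound gives `|f(x; a, W₀)| < √(2 log (2/γ))` with probability at least `1 - γ`.
On that event the bound holds for every `W` in the ball: the ReLU is `1`-Lipschitz, so moving
each `wₛ` by at most `C₀/√m` moves each of the `m` terms `aₛ · max(0, ⟨wₛ, x⟩) / √m` of `f`
by at most `C₀/m`.
-/

open Real
open scoped NNReal

lemma ofReal_one_sub_le_measure_compl {Ω : Type*} [MeasurableSpace Ω] {μ : Measure Ω}
    [IsProbabilityMeasure μ] {s : Set Ω} {γ : ℝ} (h : μ.real s ≤ γ) :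
    ENNReal.ofReal (1 - γ) ≤ μ sᶜ := by
  refine ENNReal.ofReal_le_of_le_toReal ?_
  have := measureReal_union_le (μ := μ) s sᶜ
  rw [Set.union_compl_self, probReal_univ] at this
  rw [← measureReal_def]
  linarith

noncomputable abbrev uniformBool : Measure Bool := (PMF.uniformOfFintype Bool).toMeasure

lemma integral_uniformBool (f : Bool → ℝ) :
    ∫ b, f b ∂uniformBool = (f true + f false) / 2 := by
  simp [PMF.integral_eq_sum, div_eq_inv_mul, mul_add]

lemma integral_exp_mul_signOf (y : ℝ) : ∫ b, exp (signOf b * y) ∂uniformBool = cosh y := by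
  rw [integral_uniformBool, cosh_eq]
  simp [signOf]

lemma abs_signOf_mul (b : Bool) (y : ℝ) : |signOf b * y| = |y| := by
  cases b <;> simp [signOf]

lemma abs_signOf_mul_relu_le (b : Bool) (y : ℝ) : |signOf b * max 0 y| ≤ |y| := by
  rw [abs_signOf_mul, abs_of_nonneg (le_max_left 0 y)]
  exact max_le (abs_nonneg y) (le_abs_self y)

lemma exp_le_exp_add_exp_neg_of_abs_le {y z : ℝ} (h : |y| ≤ |z|) : exp y ≤ exp z + exp (-z) := by
  calc exp y ≤ exp |z| := exp_le_exp.2 ((le_abs_self y).trans h)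
    _ ≤ exp z + exp (-z) := by
      rcases abs_choice z with hz | hz <;> rw [hz] <;> linarith [exp_pos z, exp_pos (-z)]

lemma ProbabilityTheory.hasSubgaussianMGF_id_gaussianReal (v : ℝ≥0) :
    HasSubgaussianMGF id v (gaussianReal 0 v) where
  integrable_exp_mul := integrable_exp_mul_gaussianReal
  mgf_le t := by simp [mgf_id_gaussianReal]

namespace ProbabilityTheory.HasSubgaussianMGF

variable {Ω Ω' : Type*} {mΩ : MeasurableSpace Ω} {mΩ' : MeasurableSpace Ω'}
  {μ : Measure Ω} {X : Ω → ℝ} {c : ℝ≥0}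

lemma mono (h : HasSubgaussianMGF X c μ) {c' : ℝ≥0} (hc : c ≤ c') :
    HasSubgaussianMGF X c' μ where
  integrable_exp_mul := h.integrable_exp_mul
  mgf_le t := (h.mgf_le t).trans (exp_le_exp.2 (by gcongr))

lemma of_measurePreserving {μ' : Measure Ω'} {e : Ω' → Ω} (he : MeasurePreserving e μ' μ)
    (hX : Measurable X) (h : HasSubgaussianMGF (X ∘ e) c μ') : HasSubgaussianMGF X c μ := by
  rw [← he.map_eq, ← id_map_iff hX.aemeasurable, Measure.map_map hX he.measurable]
  exact (id_map_iff (hX.comp he.measurable).aemeasurable).2 h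

lemma comp_eval {ι : Type*} [Fintype ι] {Ω : ι → Type*} [∀ i, MeasurableSpace (Ω i)]
    {μ : ∀ i, Measure (Ω i)} [∀ i, IsProbabilityMeasure (μ i)] {i : ι} {X : Ω i → ℝ}
    (h : HasSubgaussianMGF X c (μ i)) : HasSubgaussianMGF (fun ω ↦ X (ω i)) c (Measure.pi μ) :=
  of_map (measurable_pi_apply i).aemeasurable <| by rwa [(measurePreserving_eval μ i).map_eq]

lemma measureReal_abs_ge_le (h : HasSubgaussianMGF X c μ) {ε : ℝ}
    (hε : 0 ≤ ε) : μ.real {ω | ε ≤ |X ω|} ≤ 2 * exp (-ε ^ 2 / (2 * c)) := by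
  have hsplit : {ω | ε ≤ |X ω|} = {ω | ε ≤ X ω} ∪ {ω | ε ≤ (-X) ω} := by
    ext ω
    simp only [Set.mem_ofPred_eq, Set.mem_union, Pi.neg_apply, le_abs, le_neg]
  rw [hsplit, two_mul]
  exact (measureReal_union_le _ _).trans
    (add_le_add (h.measure_ge_le hε) (h.neg.measure_ge_le hε))

lemma signOf_mul_relu [IsProbabilityMeasure μ] (hX : HasSubgaussianMGF X c μ) (hXm : Measurable X) :
    HasSubgaussianMGF (fun q : Ω × Bool ↦ signOf q.2 * max 0 (X q.1)) c (μ.prod uniformBool) := by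
  have hmeas : ∀ t : ℝ, Measurable fun q : Ω × Bool ↦ exp (t * (signOf q.2 * max 0 (X q.1))) :=
    fun t ↦ by fun_prop
  have hint : ∀ t : ℝ, Integrable (fun q : Ω × Bool ↦ exp (t * (signOf q.2 * max 0 (X q.1))))
      (μ.prod uniformBool) := by
    intro t
    refine (((hX.integrable_exp_mul t).add (hX.integrable_exp_mul (-t))).comp_fst _).mono'
      (hmeas t).aestronglyMeasurable (ae_of_all _ fun q ↦ ?_)
    rw [Real.norm_of_nonneg (exp_nonneg _), Pi.add_apply, neg_mul]
    refine exp_le_exp_add_exp_neg_of_abs_le ?_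
    rw [abs_mul, abs_mul t]
    exact mul_le_mul_of_nonneg_left (abs_signOf_mul_relu_le _ _) (abs_nonneg t)
  refine ⟨hint, fun t ↦ ?_⟩
  calc mgf (fun q : Ω × Bool ↦ signOf q.2 * max 0 (X q.1)) (μ.prod uniformBool) t
      = ∫ ω, cosh (t * max 0 (X ω)) ∂μ := by
        rw [mgf, integral_prod _ (hint t)]
        congr with ω
        simp_rw [mul_left_comm t]
        exact integral_exp_mul_signOf _
    _ ≤ ∫ ω, cosh (t * X ω) ∂μ := by
        refine integral_mono_of_nonneg (ae_of_all _ fun ω ↦ (cosh_pos _).le) ?_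
          (ae_of_all _ fun ω ↦ cosh_le_cosh.2 ?_)
        · simp_rw [cosh_eq]
          exact ((hX.integrable_exp_mul t).add (by simpa using hX.integrable_exp_mul (-t))).div_const 2
        · rw [abs_mul, abs_mul, abs_of_nonneg (le_max_left (0 : ℝ) (X ω))]
          exact mul_le_mul_of_nonneg_left (max_le (abs_nonneg _) (le_abs_self _)) (abs_nonneg t)
    _ = (mgf X μ t + mgf X μ (-t)) / 2 := by
        simp_rw [cosh_eq, mgf, neg_mul]
        rw [integral_div, integral_add (hX.integrable_exp_mul t)
          (by simpa using hX.integrable_exp_mul (-t))]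
    _ ≤ exp (c * t ^ 2 / 2) := by
        have := hX.mgf_le t
        have := hX.mgf_le (-t)
        rw [neg_sq] at this
        linarith

end ProbabilityTheory.HasSubgaussianMGF

instance {d : ℕ} : IsProbabilityMeasure (gaussVec d) := by
  unfold gaussVec
  infer_instance

instance {m d : ℕ} : IsProbabilityMeasure (initMeasure m d) := by
  unfold initMeasure gaussMat signsMeasure
  infer_instance

lemma sum_sq_eq_euclNorm_sq {d : ℕ} (x : Fin d → ℝ) : ∑ i, x i ^ 2 = euclNorm x ^ 2 :=
  (sq_sqrt (by positivity)).symm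

@[fun_prop]
lemma measurable_dotp {d : ℕ} (x : Fin d → ℝ) : Measurable fun w : Fin d → ℝ ↦ dotp w x := by
  unfold dotp
  fun_prop

lemma hasSubgaussianMGF_dotp_gaussVec {d : ℕ} (x : Fin d → ℝ) :
    HasSubgaussianMGF (fun w ↦ dotp w x) (euclNorm x ^ 2).toNNReal (gaussVec d) := by
  have hcoord : ∀ i, HasSubgaussianMGF (fun w : Fin d → ℝ ↦ x i * w i)
      (x i ^ 2).toNNReal (gaussVec d) := fun i ↦
    HasSubgaussianMGF.comp_eval (μ := fun _ ↦ gaussianReal 0 1) <|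
      ((hasSubgaussianMGF_id_gaussianReal 1).const_mul (x i)).mono
        -- `const_mul` writes its proxy as a bare subtype literal, which `simp` does not unfold.
        (le_of_eq (by ext; change x i ^ 2 * 1 = _; simp [sq_nonneg]))
  have hsum := HasSubgaussianMGF.sum_of_iIndepFun
    (iIndepFun_pi (X := fun i a ↦ x i * a) fun i ↦ by fun_prop) (s := Finset.univ)
    fun i _ ↦ hcoord i
  refine (hsum.congr (ae_of_all _ fun w ↦ ?_)).mono (le_of_eq ?_)
  · simp only [dotp, mul_comm]
  · rw [← sum_sq_eq_euclNorm_sq, Real.toNNReal_sum_of_nonneg fun i _ ↦ sq_nonneg (x i)]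

noncomputable def neuronOut {d : ℕ} (x : Fin d → ℝ) (q : (Fin d → ℝ) × Bool) : ℝ :=
  signOf q.2 * max 0 (dotp q.1 x)

lemma netF_eq_sum_neuronOut {m d : ℕ} (a : Fin m → Bool) (W : Fin m → Fin d → ℝ)
    (x : Fin d → ℝ) : netF a W x = (1 / √m) * ∑ s, neuronOut x (W s, a s) := rfl

@[fun_prop]
lemma measurable_neuronOut {d : ℕ} (x : Fin d → ℝ) : Measurable (neuronOut x) := by
  unfold neuronOut
  fun_prop

lemma hasSubgaussianMGF_neuronOut {d : ℕ} (x : Fin d → ℝ) :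
    HasSubgaussianMGF (neuronOut x) (euclNorm x ^ 2).toNNReal ((gaussVec d).prod uniformBool) :=
  (hasSubgaussianMGF_dotp_gaussVec x).signOf_mul_relu (measurable_dotp x)

lemma hasSubgaussianMGF_netF_initMeasure (m d : ℕ) (x : Fin d → ℝ) :
    HasSubgaussianMGF (fun p ↦ netF p.2 p.1 x) (euclNorm x ^ 2).toNNReal (initMeasure m d) := by
  set c := (euclNorm x ^ 2).toNNReal
  have hsum := HasSubgaussianMGF.sum_of_iIndepFun
    (iIndepFun_pi (μ := fun _ : Fin m ↦ (gaussVec d).prod uniformBool) (X := fun _ ↦ neuronOut x)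
      fun _ ↦ (measurable_neuronOut x).aemeasurable)
    (s := Finset.univ) fun _ _ ↦ (hasSubgaussianMGF_neuronOut x).comp_eval
  have hscaled := (hsum.const_mul (1 / √m)).mono (c' := c) <| by
    rw [← NNReal.coe_le_coe]
    change (1 / √m) ^ 2 * ((∑ _s : Fin m, c : ℝ≥0) : ℝ) ≤ c
    rcases Nat.eq_zero_or_pos m with rfl | hm
    · simp
    · simp [sq_sqrt (Nat.cast_nonneg m), hm.ne']
  -- `initMeasure m d` is the image of the product of the neuron laws under `(s ↦ (wₛ, aₛ)) ↦ (W, a)`.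
  refine HasSubgaussianMGF.of_measurePreserving
    (measurePreserving_arrowProdEquivProdArrow _ _ _ (fun _ ↦ gaussVec d) fun _ ↦ uniformBool)
    ?_ hscaled
  simp_rw [netF_eq_sum_neuronOut]
  fun_prop

lemma abs_dotp_le {d : ℕ} (w x : Fin d → ℝ) : |dotp w x| ≤ euclNorm w * euclNorm x := by
  rw [← sqrt_sq_eq_abs, euclNorm, euclNorm, ← sqrt_mul (by positivity)]
  exact sqrt_le_sqrt (Finset.sum_mul_sq_le_sq_mul_sq _ w x)

lemma dotp_sub_left {d : ℕ} (w w' x : Fin d → ℝ) :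
    dotp (fun i ↦ w i - w' i) x = dotp w x - dotp w' x := by
  simp only [dotp, sub_mul, Finset.sum_sub_distrib]

lemma abs_neuronOut_sub_le {d : ℕ} (x w w' : Fin d → ℝ) (b : Bool) :
    |neuronOut x (w, b) - neuronOut x (w', b)| ≤ euclNorm (fun i ↦ w i - w' i) * euclNorm x := by
  calc |neuronOut x (w, b) - neuronOut x (w', b)|
      = |max (dotp w x) 0 - max (dotp w' x) 0| := by
        rw [neuronOut, neuronOut, ← mul_sub, abs_signOf_mul, max_comm, max_comm 0]
    _ ≤ |dotp w x - dotp w' x| := abs_max_sub_max_le_abs _ _ _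
    _ ≤ _ := by rw [← dotp_sub_left]; exact abs_dotp_le _ _

lemma abs_netF_sub_le {m d : ℕ} (a : Fin m → Bool) {W₀ W : Fin m → Fin d → ℝ} {V : ℝ}
    (hW : inBall W₀ W V) (x : Fin d → ℝ) :
    |netF a W x - netF a W₀ x| ≤ √m * V * euclNorm x := by
  rw [netF_eq_sum_neuronOut, netF_eq_sum_neuronOut, ← mul_sub, ← Finset.sum_sub_distrib, abs_mul,
    abs_of_nonneg (by positivity)]
  calc 1 / √m * |∑ s, (neuronOut x (W s, a s) - neuronOut x (W₀ s, a s))|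
      ≤ 1 / √m * ∑ _s : Fin m, V * euclNorm x := by
        gcongr
        refine (Finset.abs_sum_le_sum_abs _ _).trans (Finset.sum_le_sum fun s _ ↦ ?_)
        exact (abs_neuronOut_sub_le _ _ _ _).trans
          (mul_le_mul_of_nonneg_right (hW s) (sqrt_nonneg _))
    _ = √m * V * euclNorm x := by
        rw [Finset.sum_const, Finset.card_univ, Fintype.card_fin, nsmul_eq_mul, ← mul_assoc,
          ← mul_assoc, one_div_mul_eq_div, div_sqrt]

/-- Lemma bounding the function value, explicit form: with probability at
least `1 - γ`, `|f(x; a, W)| ≤ √(2·log(2/γ)) + 2·log(2/γ)/√m + C₀` simultaneously for all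
`W` in the lazy-regime ball. -/
theorem function_value_bound_explicit (d m : ℕ) (x : Fin d → ℝ) (γ C0 : ℝ)
    (hx : euclNorm x = 1) (hγ0 : 0 < γ) (hγ1 : γ < 1) (hC0 : 0 < C0) :
    ENNReal.ofReal (1 - γ) ≤
      initMeasure m d
        {p | ∀ W : Fin m → Fin d → ℝ, inBall p.1 W (C0 / Real.sqrt m) →
          |netF p.2 W x| ≤
            Real.sqrt (2 * Real.log (2 / γ)) + 2 * Real.log (2 / γ) / Real.sqrt m + C0} := by
  set L := log (2 / γ)
  have hL : 0 ≤ L := log_nonneg (by rw [le_div_iff₀ hγ0]; linarith)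
  have hZ := hasSubgaussianMGF_netF_initMeasure m d x
  rw [hx, one_pow, Real.toNNReal_one] at hZ
  have htail : (initMeasure m d).real {p | √(2 * L) ≤ |netF p.2 p.1 x|} ≤ γ := by
    refine (hZ.measureReal_abs_ge_le (sqrt_nonneg _)).trans_eq ?_
    rw [sq_sqrt (by positivity), NNReal.coe_one, mul_one, neg_div, mul_div_cancel_left₀ _ two_ne_zero,
      exp_neg, exp_log (by positivity)]
    field_simp
  refine (ofReal_one_sub_le_measure_compl htail).trans (measure_mono fun p hp W hW ↦ ?_)
  have hpert := abs_netF_sub_le p.2 hW x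
  have hC : √m * (C0 / √m) * euclNorm x ≤ C0 := by
    rw [hx, mul_one]
    rcases Nat.eq_zero_or_pos m with rfl | hm
    · simp [hC0.le]
    · rw [mul_div_cancel₀ _ (by positivity)]
  have h2L : 0 ≤ 2 * L / √m := by positivity
  simp only [Set.mem_compl_iff, Set.mem_ofPred_eq, not_le] at hp
  linarith [abs_sub_abs_le_abs_sub (netF p.2 W x) (netF p.2 p.1 x)]
end

section
/- Let w be a standard Gaussian random vector N(0, I_d) on ℝ^d, let x ∈ ℝ^d with ‖x‖ = 1, let δ ∈ ℝ^d with ‖δ‖ ≤ R ≤ 1/2, let V > 0, and let ε ∈ (0,1) satisfy d·log(2/ε) ≥ 1. Then P( ∃ δ′ ∈ ℝ^d with ‖δ′ − δ‖ ≤ ε and ∃ v ∈ ℝ^d with ‖v‖ ≤ V such that 𝟙[⟨w + v, x + δ⟩ > 0] ≠ 𝟙[⟨w + v, x + δ′⟩ > 0] ) ≤ 4ε·(√d + 2√(d·log(2/ε))) + 2·(1 + R + ε)·V. -/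
open MeasureTheory ProbabilityTheory

/-
If the sign of `⟪w + v, ·⟫` differs at `x + δ` and at `x + δ'`, then `|⟪w + v, x + δ⟫|` is at
most `‖w + v‖ ‖δ' - δ‖ ≤ ε ‖w + v‖`. Hence either `‖w‖ ≥ B := √d + 2 √(d log (2 / ε))`, or
`⟪x + δ, w⟫` lies in a slab of half-width `a := ε B + (ε + ‖x + δ‖) V`. The first event has
probability at most `ε` by a Chernoff bound, since `E exp (‖w‖² / 4) = 2 ^ (d / 2)`. The second has
probability at most `2 a`, because `⟪x + δ, w⟫ ∼ N(0, ‖x + δ‖²)` and `‖x + δ‖ ≥ 1 - R ≥ 1 / 2`.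
-/

open Real
open scoped RealInnerProductSpace

lemma lintegral_pi_prod_eq_pow {ι α : Type*} [Fintype ι] [MeasurableSpace α] {μ : Measure α}
    [IsProbabilityMeasure μ] {g : α → ENNReal} (hg : Measurable g) :
    ∫⁻ x, ∏ i, g (x i) ∂Measure.pi (fun _ : ι => μ) = (∫⁻ t, g t ∂μ) ^ Fintype.card ι := by
  rw [lintegral_prod_eq_prod_lintegral_of_indepFun _ _ (iIndepFun_pi fun _ => hg.aemeasurable)
    fun i => hg.comp (measurable_pi_apply i)]
  simp [(measurePreserving_eval (fun _ : ι => μ) _).lintegral_comp hg]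

lemma lintegral_exp_mul_sq_gaussianReal {c : ℝ} (hc : c < 1 / 2) :
    ∫⁻ t, ENNReal.ofReal (exp (c * t ^ 2)) ∂gaussianReal 0 1 = ENNReal.ofReal (√(1 - 2 * c))⁻¹ := by
  rw [gaussianReal_of_var_ne_zero _ one_ne_zero,
    lintegral_withDensity_eq_lintegral_mul _ (measurable_gaussianPDF _ _) (by fun_prop)]
  have hpt : ∀ t : ℝ, (gaussianPDF 0 1 * fun t => ENNReal.ofReal (exp (c * t ^ 2))) t
      = ENNReal.ofReal ((√(2 * π))⁻¹ * exp (-(1 / 2 - c) * t ^ 2)) := by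
    intro t
    rw [Pi.mul_apply, gaussianPDF, ← ENNReal.ofReal_mul (gaussianPDFReal_nonneg 0 1 t)]
    simp only [gaussianPDFReal, sub_zero, NNReal.coe_one, mul_one, mul_assoc, ← exp_add]
    ring_nf
  simp_rw [hpt]
  rw [← ofReal_integral_eq_lintegral_ofReal
      ((integrable_exp_neg_mul_sq (by linarith)).const_mul _)
      (Filter.Eventually.of_forall fun _ => by positivity),
    integral_const_mul, integral_gaussian, ← sqrt_inv, ← sqrt_inv, ← sqrt_mul (by positivity)]
  congr 2
  field_simp

lemma gaussianReal_Icc_le {v : NNReal} (hv : v ≠ 0) (m a b : ℝ) :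
    gaussianReal m v (Set.Icc a b) ≤ ENNReal.ofReal ((b - a) / √(2 * π * v)) := by
  have hpdf : ∀ t, gaussianPDF m v t ≤ ENNReal.ofReal (√(2 * π * v))⁻¹ := by
    intro t
    refine ENNReal.ofReal_le_ofReal (mul_le_of_le_one_right (by positivity) ?_)
    exact exp_le_one_iff.mpr (div_nonpos_of_nonpos_of_nonneg (by nlinarith [sq_nonneg (t - m)])
      (by positivity))
  calc gaussianReal m v (Set.Icc a b)
      ≤ ∫⁻ _ in Set.Icc a b, ENNReal.ofReal (√(2 * π * v))⁻¹ := by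
        rw [gaussianReal_apply _ hv]
        exact lintegral_mono hpdf
    _ = _ := by
        rw [setLIntegral_const, Real.volume_Icc, ← ENNReal.ofReal_mul (by positivity),
          div_eq_inv_mul]

section InnerProductSpace

variable {F : Type*} [NormedAddCommGroup F] [InnerProductSpace ℝ F]

lemma abs_inner_le_of_not_iff {z u u' : F} (h : ¬(0 < ⟪z, u⟫ ↔ 0 < ⟪z, u'⟫)) :
    |⟪z, u⟫| ≤ ‖z‖ * ‖u' - u‖ := by
  calc |⟪z, u⟫| ≤ |⟪z, u'⟫ - ⟪z, u⟫| := by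
        rcases lt_or_ge 0 ⟪z, u⟫ with hu | hu
        · have : ⟪z, u'⟫ ≤ 0 := not_lt.mp fun hu' => h ⟨fun _ => hu', fun _ => hu⟩
          rw [abs_of_pos hu, abs_of_nonpos (by linarith)]
          linarith
        · have : 0 < ⟪z, u'⟫ := by
            by_contra hu'
            exact h ⟨fun hu0 => absurd hu0 (not_lt.mpr hu), fun hu0 => absurd hu0 hu'⟩
          rw [abs_of_nonpos hu, abs_of_pos (by linarith)]
          linarith
    _ = |⟪z, u' - u⟫| := by rw [inner_sub_right]
    _ ≤ ‖z‖ * ‖u' - u‖ := abs_real_inner_le_norm z _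

def signFlipSet (x δ : F) (V ε : ℝ) : Set F :=
  {w | ∃ δ' : F, ‖δ' - δ‖ ≤ ε ∧ ∃ v : F, ‖v‖ ≤ V ∧
    ¬(0 < ⟪w + v, x + δ⟫ ↔ 0 < ⟪w + v, x + δ'⟫)}

lemma signFlipSet_subset (x δ : F) (V ε B : ℝ) :
    signFlipSet x δ V ε ⊆
      {w | B ≤ ‖w‖} ∪ {w | |⟪x + δ, w⟫| ≤ ε * B + (ε + ‖x + δ‖) * V} := by
  rintro w ⟨δ', hδ', v, hv, hflip⟩
  refine or_iff_not_imp_left.mpr fun hwB => ?_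
  replace hwB : ‖w‖ < B := not_le.mp hwB
  have hz : |⟪w + v, x + δ⟫| ≤ (B + V) * ε := by
    have := abs_inner_le_of_not_iff hflip
    rw [show x + δ' - (x + δ) = δ' - δ by abel] at this
    calc |⟪w + v, x + δ⟫| ≤ ‖w + v‖ * ‖δ' - δ‖ := this
      _ ≤ (B + V) * ε := mul_le_mul ((norm_add_le w v).trans (by linarith)) hδ'
          (norm_nonneg _) (by linarith [norm_nonneg w, norm_nonneg v])
  have hv' : |⟪v, x + δ⟫| ≤ V * ‖x + δ‖ :=
    (abs_real_inner_le_norm v _).trans (mul_le_mul_of_nonneg_right hv (norm_nonneg _))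
  calc |⟪x + δ, w⟫| = |⟪w + v, x + δ⟫ - ⟪v, x + δ⟫| := by
        rw [inner_add_left w v, add_sub_cancel_right, real_inner_comm]
    _ ≤ |⟪w + v, x + δ⟫| + |⟪v, x + δ⟫| := abs_sub _ _
    _ ≤ ε * B + (ε + ‖x + δ‖) * V := by linarith

end InnerProductSpace

-- The tail bound of `stdGaussian_setOf_le_norm_le` at `c = 1 / 4`, `r = B`.
lemma inv_sqrt_half_pow_mul_exp_le {n : ℕ} {ε B : ℝ} (hn : n ≠ 0) (hε0 : 0 < ε) (hε1 : ε < 1)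
    (hB : 2 * √(n * log (2 / ε)) ≤ B) :
    (√(1 - 2 * (1 / 4)))⁻¹ ^ n * exp (-(1 / 4 * B ^ 2)) ≤ ε := by
  have hL : 0 ≤ log (2 / ε) := log_nonneg (by rw [le_div_iff₀ hε0]; linarith)
  have hinv : (√(1 - 2 * (1 / 4) : ℝ))⁻¹ ≤ 2 :=
    inv_le_of_inv_le₀ (by norm_num) (le_sqrt_of_sq_le (by norm_num))
  have hB2 : 4 * (n * log (2 / ε)) ≤ B ^ 2 := by
    have := pow_le_pow_left₀ (by positivity) hB 2
    rwa [mul_pow, sq_sqrt (by positivity), show (2 : ℝ) ^ 2 = 4 by norm_num] at this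
  have hexp : exp (-(1 / 4 * B ^ 2)) ≤ (ε / 2) ^ n := by
    calc exp (-(1 / 4 * B ^ 2)) ≤ exp (n * -log (2 / ε)) := exp_le_exp.mpr (by linarith)
      _ = (ε / 2) ^ n := by rw [exp_nat_mul, exp_neg, exp_log (by positivity), inv_div]
  calc (√(1 - 2 * (1 / 4)))⁻¹ ^ n * exp (-(1 / 4 * B ^ 2)) ≤ 2 ^ n * (ε / 2) ^ n := by
        gcongr
    _ = ε ^ n := by rw [← mul_pow]; ring_nf
    _ ≤ ε := pow_le_of_le_one hε0.le hε1.le hn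

section StdGaussian

variable {E : Type*} [NormedAddCommGroup E] [InnerProductSpace ℝ E] [FiniteDimensional ℝ E]
  [MeasurableSpace E] [BorelSpace E]

lemma lintegral_exp_mul_norm_sq_stdGaussian {c : ℝ} (hc : c < 1 / 2) :
    ∫⁻ w, ENNReal.ofReal (exp (c * ‖w‖ ^ 2)) ∂stdGaussian E =
      ENNReal.ofReal ((√(1 - 2 * c))⁻¹ ^ Module.finrank ℝ E) := by
  set b := stdOrthonormalBasis ℝ E
  have hnorm : ∀ x : Fin (Module.finrank ℝ E) → ℝ,
      ENNReal.ofReal (exp (c * ‖∑ i, x i • b i‖ ^ 2)) =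
        ∏ i, ENNReal.ofReal (exp (c * x i ^ 2)) := by
    intro x
    have : ‖∑ i, x i • b i‖ ^ 2 = ∑ i, x i ^ 2 := by
      rw [show ∑ i, x i • b i = b.repr.symm (WithLp.toLp 2 x) from b.sum_repr_symm _,
        b.repr.symm.norm_map, EuclideanSpace.norm_sq_eq]
      simp
    rw [← ENNReal.ofReal_prod_of_nonneg (fun _ _ => (exp_pos _).le), ← exp_sum, ← Finset.mul_sum,
      this]
  rw [stdGaussian, lintegral_map (by fun_prop) (by fun_prop), lintegral_congr hnorm,
    lintegral_pi_prod_eq_pow (g := fun t => ENNReal.ofReal (exp (c * t ^ 2))) (by fun_prop),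
    lintegral_exp_mul_sq_gaussianReal hc, ← ENNReal.ofReal_pow (by positivity), Fintype.card_fin]

lemma stdGaussian_setOf_le_norm_le {c : ℝ} (hc0 : 0 ≤ c) (hc : c < 1 / 2) {r : ℝ} (hr : 0 ≤ r) :
    stdGaussian E {w | r ≤ ‖w‖} ≤
      ENNReal.ofReal ((√(1 - 2 * c))⁻¹ ^ Module.finrank ℝ E * exp (-(c * r ^ 2))) := by
  have hsub : {w : E | r ≤ ‖w‖} ⊆
      {w | ENNReal.ofReal (exp (c * r ^ 2)) ≤ ENNReal.ofReal (exp (c * ‖w‖ ^ 2))} := by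
    intro w (hw : r ≤ ‖w‖)
    show ENNReal.ofReal _ ≤ ENNReal.ofReal _
    gcongr
  calc stdGaussian E {w | r ≤ ‖w‖}
      ≤ (∫⁻ w, ENNReal.ofReal (exp (c * ‖w‖ ^ 2)) ∂stdGaussian E) /
          ENNReal.ofReal (exp (c * r ^ 2)) :=
        (measure_mono hsub).trans
          (meas_ge_le_lintegral_div (by fun_prop) (by simp [exp_pos]) ENNReal.ofReal_ne_top)
    _ = _ := by
        rw [lintegral_exp_mul_norm_sq_stdGaussian hc, ← ENNReal.ofReal_div_of_pos (exp_pos _),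
          div_eq_mul_inv, ← exp_neg]

lemma stdGaussian_map_innerSL (u : E) :
    (stdGaussian E).map (innerSL ℝ u) = gaussianReal 0 (‖u‖ ^ 2).toNNReal := by
  rw [IsGaussian.map_eq_gaussianReal, integral_strongDual_stdGaussian, variance_dual_stdGaussian,
    innerSL_apply_norm]

lemma stdGaussian_setOf_abs_inner_le_le {u : E} (hu : u ≠ 0) (a : ℝ) :
    stdGaussian E {w | |⟪u, w⟫| ≤ a} ≤ ENNReal.ofReal (2 * a / (√(2 * π) * ‖u‖)) := by
  have hset : {w : E | |⟪u, w⟫| ≤ a} = innerSL ℝ u ⁻¹' Set.Icc (-a) a := by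
    ext w
    simp [abs_le]
  rw [hset, ← Measure.map_apply (by fun_prop) measurableSet_Icc, stdGaussian_map_innerSL]
  refine (gaussianReal_Icc_le (by simpa using hu) _ _ _).trans_eq ?_
  rw [Real.coe_toNNReal _ (by positivity), sqrt_mul (by positivity), sqrt_sq (norm_nonneg u)]
  ring_nf

theorem stdGaussian_signFlipSet_le (x δ : E) {R V ε : ℝ} (hx : ‖x‖ = 1) (hδ : ‖δ‖ ≤ R)
    (hR : R ≤ 1 / 2) (hV : 0 ≤ V) (hε0 : 0 < ε) (hε1 : ε < 1)
    (hnε : 1 ≤ (Module.finrank ℝ E : ℝ) * log (2 / ε)) :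
    stdGaussian E (signFlipSet x δ V ε) ≤
      ENNReal.ofReal (4 * ε * (√(Module.finrank ℝ E) +
        2 * √(Module.finrank ℝ E * log (2 / ε))) + 2 * (1 + R + ε) * V) := by
  set n := Module.finrank ℝ E
  set B := √n + 2 * √(n * log (2 / ε))
  set a := ε * B + (ε + ‖x + δ‖) * V
  have hn : n ≠ 0 := by
    rintro hn
    norm_num [hn] at hnε
  have hB : 2 * √(n * log (2 / ε)) ≤ B := le_add_of_nonneg_left (sqrt_nonneg _)
  have hB1 : 2 ≤ B := hB.trans' (by linarith [(one_le_sqrt (x := n * log (2 / ε))).mpr hnε])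
  have hu_lo : 1 / 2 ≤ ‖x + δ‖ := by
    have := norm_sub_le (x + δ) δ
    rw [add_sub_cancel_right, hx] at this
    linarith
  have hu_hi : ‖x + δ‖ ≤ 1 + R := (norm_add_le x δ).trans (by linarith)
  have ha : 0 ≤ a := by positivity
  have htail : stdGaussian E {w | B ≤ ‖w‖} ≤ ENNReal.ofReal ε :=
    (stdGaussian_setOf_le_norm_le (by norm_num) (by norm_num) (by linarith)).trans
      (ENNReal.ofReal_le_ofReal (inv_sqrt_half_pow_mul_exp_le hn hε0 hε1 hB))
  have hslab : stdGaussian E {w | |⟪x + δ, w⟫| ≤ a} ≤ ENNReal.ofReal (2 * a) := by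
    have hu0 : x + δ ≠ 0 := norm_pos_iff.mp (by linarith)
    have hπ : 2 ≤ √(2 * π) := le_sqrt_of_sq_le (by linarith [pi_gt_three])
    refine (stdGaussian_setOf_abs_inner_le_le hu0 a).trans (ENNReal.ofReal_le_ofReal ?_)
    exact div_le_self (by positivity) (by nlinarith)
  calc stdGaussian E (signFlipSet x δ V ε)
      ≤ stdGaussian E ({w | B ≤ ‖w‖} ∪ {w | |⟪x + δ, w⟫| ≤ a}) :=
        measure_mono (signFlipSet_subset x δ V ε B)
    _ ≤ ENNReal.ofReal ε + ENNReal.ofReal (2 * a) :=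
        (measure_union_le _ _).trans (add_le_add htail hslab)
    _ = ENNReal.ofReal (ε + 2 * a) := (ENNReal.ofReal_add hε0.le (by positivity)).symm
    _ ≤ _ := ENNReal.ofReal_le_ofReal (by nlinarith [mul_le_mul_of_nonneg_right hu_hi hV])

end StdGaussian

lemma euclNorm_eq_norm_toLp {d : ℕ} (w : Fin d → ℝ) :
    euclNorm w = ‖WithLp.toLp 2 w‖ := by
  simp [euclNorm, EuclideanSpace.norm_eq]

lemma dotp_eq_inner_toLp {d : ℕ} (w x : Fin d → ℝ) :
    dotp w x = ⟪WithLp.toLp 2 w, WithLp.toLp 2 x⟫ := by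
  simp [dotp, EuclideanSpace.inner_toLp_toLp, dotProduct, mul_comm]

lemma gaussVec_eq_map_ofLp (d : ℕ) :
    gaussVec d = (stdGaussian (EuclideanSpace ℝ (Fin d))).map WithLp.ofLp := by
  rw [← map_pi_eq_stdGaussian, Measure.map_map (by fun_prop) (by fun_prop)]
  exact Measure.map_id.symm

/-- Lemma 4, eq. (9): for a standard Gaussian vector `w` on `ℝ^d`, the
probability that the activation sign at a perturbed weight `w + v`, `‖v‖ ≤ V`, differs
between `x + δ` and some `x + δ'` with `‖δ' - δ‖ ≤ ε` is at most
`4ε·(√d + 2√(d·log(2/ε))) + 2·(1 + R + ε)·V`. -/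
theorem sign_flip_probability_net (d : ℕ) (x δ : Fin d → ℝ) (R V ε : ℝ)
    (hx : euclNorm x = 1) (hδ : euclNorm δ ≤ R) (hR : R ≤ 1 / 2)
    (hV : 0 < V) (hε0 : 0 < ε) (hε1 : ε < 1) (hdε : 1 ≤ (d : ℝ) * Real.log (2 / ε)) :
    gaussVec d
        {w | ∃ δ' : Fin d → ℝ, euclNorm (fun i => δ' i - δ i) ≤ ε ∧
          ∃ v : Fin d → ℝ, euclNorm v ≤ V ∧
            ¬((0 < dotp (fun i => w i + v i) (fun i => x i + δ i)) ↔
              (0 < dotp (fun i => w i + v i) (fun i => x i + δ' i)))} ≤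
      ENNReal.ofReal
        (4 * ε * (Real.sqrt d + 2 * Real.sqrt ((d : ℝ) * Real.log (2 / ε))) +
          2 * (1 + R + ε) * V) := by
  rw [gaussVec_eq_map_ofLp, ← MeasurableEquiv.coe_toLp_symm, MeasurableEquiv.map_apply]
  refine (measure_mono ?_).trans (by
    simpa using stdGaussian_signFlipSet_le (WithLp.toLp 2 x) (WithLp.toLp 2 δ)
      (by rwa [← euclNorm_eq_norm_toLp]) (by rwa [← euclNorm_eq_norm_toLp]) hR hV.le hε0 hε1
      (by simpa using hdε))
  rintro w ⟨δ', hδ', v, hv, hflip⟩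
  exact ⟨WithLp.toLp 2 δ', (euclNorm_eq_norm_toLp _).symm.trans_le hδ', WithLp.toLp 2 v,
    (euclNorm_eq_norm_toLp v).symm.trans_le hv,
    by simp only [dotp_eq_inner_toLp] at hflip; exact hflip⟩
end
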